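/- Let n and k be integers with 2 ≤ k < n, let a : (0,∞) → ℝ be measurable, let f : ℝⁿ → ℂ be measurable, and let x ∈ ℝⁿ. Then ∫₀^∞ ∫_{{y ∈ ℝⁿ : |x−y| ≥ s}} |f(y)| |a(s)| |x−y|^{2−n} s^{n−k−1} (|x−y|² − s²)^{k/2 − 1} dy ds ≤ ( ∫₀^∞ s^{n−k−1} |a(s)| ds ) · ( ∫_{ℝⁿ} |f(y)| |x−y|^{k−n} dy ). -/
import Mathlib


open MeasureTheory

/-- Remark `rem 20260306-1`(2), case `k ≥ 2`: the double integral in condition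
(eq:260118-11) is dominated by `I₀(a) · I_k[|f|](x)`. -/
theorem stmt_11 (n k : ℕ) (hk : 2 ≤ k) (hkn : k < n)
    (a : ℝ → ℝ) (ha : Measurable a)
    (f : EuclideanSpace ℝ (Fin n) → ℂ) (hf : Measurable f)
    (x : EuclideanSpace ℝ (Fin n)) :
    (∫⁻ s in Set.Ioi (0 : ℝ), ∫⁻ y in {y | s ≤ dist x y},
        ENNReal.ofReal (‖f y‖ * |a s| * dist x y ^ ((2 : ℝ) - n) * s ^ ((n : ℝ) - k - 1) *
          (dist x y ^ 2 - s ^ 2) ^ ((k : ℝ) / 2 - 1)))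
      ≤ (∫⁻ s in Set.Ioi (0 : ℝ), ENNReal.ofReal (s ^ ((n : ℝ) - k - 1) * |a s|)) *
        (∫⁻ y, ENNReal.ofReal (‖f y‖ * dist x y ^ ((k : ℝ) - n))) := by
  set C : ENNReal := ∫⁻ y, ENNReal.ofReal (‖f y‖ * dist x y ^ ((k : ℝ) - n)) with hC
  have hk2 : (2 : ℝ) ≤ (k : ℝ) := by exact_mod_cast hk
  have key : ∀ s ∈ Set.Ioi (0 : ℝ),
      (∫⁻ y in {y | s ≤ dist x y},
        ENNReal.ofReal (‖f y‖ * |a s| * dist x y ^ ((2 : ℝ) - n) * s ^ ((n : ℝ) - k - 1) *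
          (dist x y ^ 2 - s ^ 2) ^ ((k : ℝ) / 2 - 1)))
      ≤ ENNReal.ofReal (s ^ ((n : ℝ) - k - 1) * |a s|) * C := by
    intro s hs
    rw [Set.mem_Ioi] at hs
    calc (∫⁻ y in {y | s ≤ dist x y},
        ENNReal.ofReal (‖f y‖ * |a s| * dist x y ^ ((2 : ℝ) - n) * s ^ ((n : ℝ) - k - 1) *
          (dist x y ^ 2 - s ^ 2) ^ ((k : ℝ) / 2 - 1)))
        ≤ ∫⁻ y in {y | s ≤ dist x y},
            ENNReal.ofReal (s ^ ((n : ℝ) - k - 1) * |a s|) *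
              ENNReal.ofReal (‖f y‖ * dist x y ^ ((k : ℝ) - n)) := by
          apply setLIntegral_mono' (by
            have : MeasurableSet {y : EuclideanSpace ℝ (Fin n) | dist x y ∈ Set.Ici s} :=
              (measurable_const.dist measurable_id) measurableSet_Ici
            simpa using this)
          intro y hy
          have hy : s ≤ dist x y := hy
          set r := dist x y with hr
          have hr0 : 0 < r := lt_of_lt_of_le hs hy
          rw [← ENNReal.ofReal_mul (by positivity)]
          apply ENNReal.ofReal_le_ofReal
          have hs2 : s ^ 2 ≤ r ^ 2 := by nlinarith
          have h1 : (r ^ 2 - s ^ 2) ^ ((k : ℝ) / 2 - 1) ≤ (r ^ 2) ^ ((k : ℝ) / 2 - 1) :=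
            Real.rpow_le_rpow (by linarith) (by nlinarith) (by linarith)
          have h2 : ((r : ℝ) ^ 2) ^ ((k : ℝ) / 2 - 1) = r ^ ((k : ℝ) - 2) := by
            rw [← Real.rpow_natCast r 2, ← Real.rpow_mul hr0.le]
            norm_num
            rw [show (2 : ℝ) * ((k : ℝ) / 2 - 1) = (k : ℝ) - 2 by ring]
          have h3 : r ^ ((2 : ℝ) - n) * r ^ ((k : ℝ) - 2) = r ^ ((k : ℝ) - n) := by
            rw [← Real.rpow_add hr0]
            ring_nf
          have key2 : r ^ ((2 : ℝ) - n) * (r ^ 2 - s ^ 2) ^ ((k : ℝ) / 2 - 1)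
              ≤ r ^ ((k : ℝ) - n) := by
            calc r ^ ((2 : ℝ) - n) * (r ^ 2 - s ^ 2) ^ ((k : ℝ) / 2 - 1)
                ≤ r ^ ((2 : ℝ) - n) * (r ^ 2) ^ ((k : ℝ) / 2 - 1) := by
                  apply mul_le_mul_of_nonneg_left h1 (by positivity)
              _ = r ^ ((k : ℝ) - n) := by rw [h2, h3]
          calc ‖f y‖ * |a s| * r ^ ((2 : ℝ) - n) * s ^ ((n : ℝ) - k - 1) *
                (r ^ 2 - s ^ 2) ^ ((k : ℝ) / 2 - 1)
              = (‖f y‖ * |a s| * s ^ ((n : ℝ) - k - 1)) *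
                (r ^ ((2 : ℝ) - n) * (r ^ 2 - s ^ 2) ^ ((k : ℝ) / 2 - 1)) := by ring
            _ ≤ (‖f y‖ * |a s| * s ^ ((n : ℝ) - k - 1)) * (r ^ ((k : ℝ) - n)) := by
                apply mul_le_mul_of_nonneg_left key2 (by positivity)
            _ = s ^ ((n : ℝ) - k - 1) * |a s| * (‖f y‖ * r ^ ((k : ℝ) - n)) := by ring
      _ ≤ ∫⁻ y, ENNReal.ofReal (s ^ ((n : ℝ) - k - 1) * |a s|) *
            ENNReal.ofReal (‖f y‖ * dist x y ^ ((k : ℝ) - n)) :=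
          setLIntegral_le_lintegral _ _
      _ = ENNReal.ofReal (s ^ ((n : ℝ) - k - 1) * |a s|) * C :=
          lintegral_const_mul' _ _ ENNReal.ofReal_ne_top
  calc (∫⁻ s in Set.Ioi (0 : ℝ), ∫⁻ y in {y | s ≤ dist x y},
        ENNReal.ofReal (‖f y‖ * |a s| * dist x y ^ ((2 : ℝ) - n) * s ^ ((n : ℝ) - k - 1) *
          (dist x y ^ 2 - s ^ 2) ^ ((k : ℝ) / 2 - 1)))
      ≤ ∫⁻ s in Set.Ioi (0 : ℝ), ENNReal.ofReal (s ^ ((n : ℝ) - k - 1) * |a s|) * C :=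
        setLIntegral_mono' measurableSet_Ioi key
    _ = (∫⁻ s in Set.Ioi (0 : ℝ), ENNReal.ofReal (s ^ ((n : ℝ) - k - 1) * |a s|)) * C := by
        apply lintegral_mul_const''
        apply Measurable.aemeasurable
        apply ENNReal.measurable_ofReal.comp
        fun_prop
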